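/- For any nonnegative integer r, (1-t)(a^{-1/2}/t) ∑_{k=1}^{r} q^{-k}(1-a q^{2k}) ((t;q)_{r-k}/(q;q)_{r-k}) ((a q^{r+k+1};q)_{r-k}/(a q^{r+k} t;q)_{r-k}) = ((t;q)_r/(q;q)_r) · ((a q^{r+1};q)_r/(a q^r t;q)_r) · ( a^{1/2} q^r + a^{-1/2} q^{-r}/t - a^{1/2} - a^{-1/2}/t ). -/
import Mathlib


open Finset

/-- The q-Pochhammer symbol `(x;q)_k = ∏_{l=0}^{k-1} (1 - x q^l)`. -/
def qPoch {F : Type*} [Field F] (x q : F) (k : ℕ) : F :=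
  ∏ l ∈ Finset.range k, (1 - x * q ^ l)

section Aux

variable {F : Type*} [Field F]

lemma qPoch_zero (x q : F) : qPoch x q 0 = 1 := by simp [qPoch]

lemma qPoch_succ_right (x q : F) (n : ℕ) :
    qPoch x q (n + 1) = qPoch x q n * (1 - x * q ^ n) := by
  simp [qPoch, Finset.prod_range_succ]

lemma qPoch_succ_left (x q : F) (n : ℕ) :
    qPoch x q (n + 1) = (1 - x) * qPoch (x * q) q n := by
  rw [qPoch, Finset.prod_range_succ', qPoch, pow_zero, mul_one, mul_comm]
  congr 1
  refine Finset.prod_congr rfl fun l _ => ?_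
  rw [pow_succ']
  ring_nf

lemma qPoch_q_ne (q : F) (hq0 : q ≠ 0) (hq : ∀ m : ℤ, m ≠ 0 → q ^ m ≠ 1) (n : ℕ) :
    qPoch q q n ≠ 0 := by
  rw [qPoch]
  apply Finset.prod_ne_zero_iff.mpr
  intro l _ h
  have h1 : q ^ ((l : ℤ) + 1) = 1 := by
    rw [zpow_add₀ hq0, zpow_one, zpow_natCast]
    linear_combination -h
  exact hq ((l : ℤ) + 1) (by omega) h1

lemma qPoch_bt_ne (b q t : F) (hq0 : q ≠ 0)
    (hat : ∀ m : ℤ, b ^ 2 * t * q ^ m ≠ 1) (s n : ℕ) :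
    qPoch (b ^ 2 * q ^ s * t) q n ≠ 0 := by
  rw [qPoch]
  apply Finset.prod_ne_zero_iff.mpr
  intro l _ h
  refine hat ((s : ℤ) + l) ?_
  rw [zpow_add₀ hq0, zpow_natCast, zpow_natCast]
  linear_combination -h

lemma one_sub_bt_ne (b q t : F) (hat : ∀ m : ℤ, b ^ 2 * t * q ^ m ≠ 1) (s : ℕ) :
    1 - b ^ 2 * q ^ s * t ≠ 0 := by
  intro h
  exact hat s (by rw [zpow_natCast]; linear_combination -h)

lemma one_sub_q_ne (q : F) (hq : ∀ m : ℤ, m ≠ 0 → q ^ m ≠ 1) (s : ℕ) (hs : s ≠ 0) :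
    1 - q ^ s ≠ 0 := by
  intro h
  exact hq s (by exact_mod_cast hs) (by rw [zpow_natCast]; linear_combination -h)

/-- The summand. -/
noncomputable def termS (b q t : F) (r k : ℕ) : F :=
  q ^ (-(k : ℤ)) * (1 - b ^ 2 * q ^ (2 * k)) *
    (qPoch t q (r - k) / qPoch q q (r - k)) *
    (qPoch (b ^ 2 * q ^ (r + k + 1)) q (r - k) /
      qPoch (b ^ 2 * q ^ (r + k) * t) q (r - k))

/-- Closed form of `(1-t)` times the partial sum from `m` to `r`. -/
noncomputable def GS (b q t : F) (r m : ℕ) : F :=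
  -(q ^ m)⁻¹ *
    (b ^ 2 * (q ^ m) ^ 2 - ((q ^ r)⁻¹ + b ^ 2 * t * q ^ r) * q ^ m + t) *
    (qPoch t q (r - m) / qPoch q q (r - m)) *
    (qPoch (b ^ 2 * q ^ (r + m + 1)) q (r - m) /
      qPoch (b ^ 2 * q ^ (r + m) * t) q (r - m))

lemma base_case (b q t : F) (hq0 : q ≠ 0) (r : ℕ) :
    (1 - t) * termS b q t r r = GS b q t r r := by
  have hx : (q : F) ^ r ≠ 0 := pow_ne_zero _ hq0
  rw [termS, GS]
  simp only [Nat.sub_self, qPoch_zero]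
  rw [zpow_neg, zpow_natCast]
  rw [show (q : F) ^ (2 * r) = (q ^ r) ^ 2 by rw [← pow_mul, mul_comm]]
  field_simp
  ring

set_option maxHeartbeats 1000000 in
lemma step_aux {F : Type*} [Field F] (x y q b t A B C D : F)
    (hx : x ≠ 0) (hy : y ≠ 0) (hq0 : q ≠ 0) (hB : B ≠ 0) (hD : D ≠ 0)
    (hq1 : 1 - q * y ≠ 0) (hbt2 : 1 - b ^ 2 * (x ^ 2 * y * q) * t ≠ 0) :
    -x⁻¹ * (b ^ 2 * x ^ 2 - ((x * y * q)⁻¹ + b ^ 2 * t * (x * y * q)) * x + t) *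
      (A * (1 - t * y) / (B * (1 - q * y))) *
      ((1 - b ^ 2 * (x ^ 2 * y * q ^ 2)) * C / ((1 - b ^ 2 * (x ^ 2 * y * q) * t) * D))
    = (1 - t) * (x⁻¹ * (1 - b ^ 2 * x ^ 2) * (A * (1 - t * y) / (B * (1 - q * y))) *
        ((1 - b ^ 2 * (x ^ 2 * y * q ^ 2)) * C / ((1 - b ^ 2 * (x ^ 2 * y * q) * t) * D)))
      + -(x * q)⁻¹ * (b ^ 2 * (x * q) ^ 2 - ((x * y * q)⁻¹ + b ^ 2 * t * (x * y * q)) * (x * q) + t) *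
          (A / B) * (C / D) := by
  set u : F := 1 - q * y with hu
  set v : F := 1 - b ^ 2 * (x ^ 2 * y * q) * t with hv
  clear_value u v
  have hp : (-(b ^ 2 * x ^ 2 * y * q - 1 - b ^ 2 * t * x ^ 2 * y ^ 2 * q ^ 2 + t * y * q)
        - (1 - t) * (1 - b ^ 2 * x ^ 2) * y * q) * ((1 - t * y) * (1 - b ^ 2 * (x ^ 2 * y * q ^ 2)))
      = (-(b ^ 2 * x ^ 2 * q ^ 2 * y - 1 - b ^ 2 * t * x ^ 2 * y ^ 2 * q ^ 2 + t * y)) * (u * v) := by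
    rw [hu, hv]; ring
  have h1 : x * x⁻¹ = 1 := mul_inv_cancel₀ hx
  have h2 : y * y⁻¹ = 1 := mul_inv_cancel₀ hy
  have h3 : q * q⁻¹ = 1 := mul_inv_cancel₀ hq0
  have h4 : u * u⁻¹ = 1 := mul_inv_cancel₀ hq1
  have h5 : v * v⁻¹ = 1 := mul_inv_cancel₀ hbt2
  linear_combination (x⁻¹*y⁻¹*q⁻¹*A*B⁻¹*C*D⁻¹*u⁻¹*v⁻¹) * hp
      + (x⁻¹*y⁻¹*q⁻¹*A*B⁻¹*C*D⁻¹*u⁻¹*v⁻¹ - x⁻¹*y⁻¹*q*q⁻¹ ^ 2*A*B⁻¹*C*D⁻¹ - x⁻¹*y*y⁻¹*q⁻¹*t*A*B⁻¹*C*D⁻¹*u⁻¹*v⁻¹ - x*b ^ 2*t*A*B⁻¹*C*D⁻¹*u⁻¹*v⁻¹ - x*q*b ^ 2*A*B⁻¹*C*D⁻¹*u⁻¹*v⁻¹ + x*q ^ 2*q⁻¹*b ^ 2*A*B⁻¹*C*D⁻¹ + x*y*b ^ 2*t ^ 2*A*B⁻¹*C*D⁻¹*u⁻¹*v⁻¹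 + (2)*x*y*q*b ^ 2*t*A*B⁻¹*C*D⁻¹*u⁻¹*v⁻¹ + x*y*q ^ 2*b ^ 2*A*B⁻¹*C*D⁻¹*u⁻¹*v⁻¹ - x*y*q ^ 2*q⁻¹*b ^ 2*t*A*B⁻¹*C*D⁻¹ + x*y*y⁻¹*q*q⁻¹*b ^ 2*t*A*B⁻¹*C*D⁻¹*u⁻¹*v⁻¹ + x*y*y⁻¹*q ^ 2*q⁻¹*b ^ 2*A*B⁻¹*C*D⁻¹*u⁻¹*v⁻¹ - x*y*y⁻¹*q ^ 2*q⁻¹*b ^ 2*A*B⁻¹*C*D⁻¹*u*u⁻¹*v*v⁻¹ - x*y ^ 2*q*b ^ 2*t ^ 2*A*B⁻¹*C*D⁻¹*u⁻¹*v⁻¹ - x*y ^ 2*q ^ 2*b ^ 2*t*A*B⁻¹*C*D⁻¹*u⁻¹*v⁻¹ - x*y ^ 2*y⁻¹*q*q⁻¹*b ^ 2*t ^ 2*A*B⁻¹*C*D⁻¹*u⁻¹*v⁻¹ - (2)*x*y ^ 2*y⁻¹*q ^ 2*q⁻¹*b ^ 2*t*A*B⁻¹*C*D⁻¹*u⁻¹*v⁻¹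 + x*y ^ 2*y⁻¹*q ^ 2*q⁻¹*b ^ 2*t*A*B⁻¹*C*D⁻¹*u*u⁻¹*v*v⁻¹ - x*y ^ 2*y⁻¹*q ^ 3*q⁻¹*b ^ 2*A*B⁻¹*C*D⁻¹*u⁻¹*v⁻¹ + x*y ^ 3*y⁻¹*q ^ 2*q⁻¹*b ^ 2*t ^ 2*A*B⁻¹*C*D⁻¹*u⁻¹*v⁻¹ + x*y ^ 3*y⁻¹*q ^ 3*q⁻¹*b ^ 2*t*A*B⁻¹*C*D⁻¹*u⁻¹*v⁻¹ - x ^ 2*x⁻¹*y*y⁻¹*q ^ 2*q⁻¹*b ^ 2*A*B⁻¹*C*D⁻¹*u⁻¹*v⁻¹ + x ^ 2*x⁻¹*y ^ 2*y⁻¹*q ^ 2*q⁻¹*b ^ 2*t*A*B⁻¹*C*D⁻¹*u⁻¹*v⁻¹ + x ^ 3*y*q ^ 2*b ^ 4*t*A*B⁻¹*C*D⁻¹*u⁻¹*v⁻¹ - x ^ 3*y ^ 2*q ^ 2*b ^ 4*t ^ 2*A*B⁻¹*C*D⁻¹*u⁻¹*v⁻¹ - x ^ 3*y ^ 2*q ^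 3*b ^ 4*t*A*B⁻¹*C*D⁻¹*u⁻¹*v⁻¹ - x ^ 3*y ^ 2*y⁻¹*q ^ 3*q⁻¹*b ^ 4*t*A*B⁻¹*C*D⁻¹*u⁻¹*v⁻¹ + x ^ 3*y ^ 3*q ^ 3*b ^ 4*t ^ 2*A*B⁻¹*C*D⁻¹*u⁻¹*v⁻¹ + x ^ 3*y ^ 3*y⁻¹*q ^ 3*q⁻¹*b ^ 4*t ^ 2*A*B⁻¹*C*D⁻¹*u⁻¹*v⁻¹ + x ^ 3*y ^ 3*y⁻¹*q ^ 4*q⁻¹*b ^ 4*t*A*B⁻¹*C*D⁻¹*u⁻¹*v⁻¹ - x ^ 3*y ^ 4*y⁻¹*q ^ 4*q⁻¹*b ^ 4*t ^ 2*A*B⁻¹*C*D⁻¹*u⁻¹*v⁻¹) * h1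
      + (- x⁻¹*q⁻¹*t*A*B⁻¹*C*D⁻¹*u*u⁻¹*v*v⁻¹ + x⁻¹*q*q⁻¹*A*B⁻¹*C*D⁻¹*u⁻¹*v⁻¹ - x⁻¹*y*q*q⁻¹*t*A*B⁻¹*C*D⁻¹*u⁻¹*v⁻¹ + x*q*q⁻¹*b ^ 2*t*A*B⁻¹*C*D⁻¹*u⁻¹*v⁻¹ + x*q ^ 2*q⁻¹*b ^ 2*A*B⁻¹*C*D⁻¹*u⁻¹*v⁻¹ - x*q ^ 2*q⁻¹*b ^ 2*A*B⁻¹*C*D⁻¹*u*u⁻¹*v*v⁻¹ - x*y*q*q⁻¹*b ^ 2*t ^ 2*A*B⁻¹*C*D⁻¹*u⁻¹*v⁻¹ - (2)*x*y*q ^ 2*q⁻¹*b ^ 2*t*A*B⁻¹*C*D⁻¹*u⁻¹*v⁻¹ + x*y*q ^ 2*q⁻¹*b ^ 2*t*A*B⁻¹*C*D⁻¹*u*u⁻¹*v*v⁻¹ - x*y*q ^ 3*q⁻¹*b ^ 2*A*B⁻¹*C*D⁻¹*u⁻¹*v⁻¹ + x*y ^ 2*q ^ 2*q⁻¹*b ^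 2*t ^ 2*A*B⁻¹*C*D⁻¹*u⁻¹*v⁻¹ + x*y ^ 2*q ^ 3*q⁻¹*b ^ 2*t*A*B⁻¹*C*D⁻¹*u⁻¹*v⁻¹ - x ^ 2*x⁻¹*q ^ 2*q⁻¹*b ^ 2*A*B⁻¹*C*D⁻¹*u⁻¹*v⁻¹ + x ^ 2*x⁻¹*y*q ^ 2*q⁻¹*b ^ 2*t*A*B⁻¹*C*D⁻¹*u⁻¹*v⁻¹ - x ^ 3*y*q ^ 3*q⁻¹*b ^ 4*t*A*B⁻¹*C*D⁻¹*u⁻¹*v⁻¹ + x ^ 3*y ^ 2*q ^ 3*q⁻¹*b ^ 4*t ^ 2*A*B⁻¹*C*D⁻¹*u⁻¹*v⁻¹ + x ^ 3*y ^ 2*q ^ 4*q⁻¹*b ^ 4*t*A*B⁻¹*C*D⁻¹*u⁻¹*v⁻¹ - x ^ 3*y ^ 3*q ^ 4*q⁻¹*b ^ 4*t ^ 2*A*B⁻¹*C*D⁻¹*u⁻¹*v⁻¹) * h2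
      + (x⁻¹*A*B⁻¹*C*D⁻¹*u⁻¹*v⁻¹ - x⁻¹*y⁻¹*q⁻¹*A*B⁻¹*C*D⁻¹ - x⁻¹*y*t*A*B⁻¹*C*D⁻¹*u⁻¹*v⁻¹ + x*b ^ 2*t*A*B⁻¹*C*D⁻¹*u⁻¹*v⁻¹ + x*q*b ^ 2*A*B⁻¹*C*D⁻¹ + x*q*b ^ 2*A*B⁻¹*C*D⁻¹*u⁻¹*v⁻¹ - x*q*b ^ 2*A*B⁻¹*C*D⁻¹*u*u⁻¹*v*v⁻¹ - x*y*b ^ 2*t ^ 2*A*B⁻¹*C*D⁻¹*u⁻¹*v⁻¹ - x*y*q*b ^ 2*t*A*B⁻¹*C*D⁻¹ - (2)*x*y*q*b ^ 2*t*A*B⁻¹*C*D⁻¹*u⁻¹*v⁻¹ + x*y*q*b ^ 2*t*A*B⁻¹*C*D⁻¹*u*u⁻¹*v*v⁻¹ - x*y*q ^ 2*b ^ 2*A*B⁻¹*C*D⁻¹*u⁻¹*v⁻¹ + x*y ^ 2*q*b ^ 2*t ^ 2*A*B⁻¹*C*D⁻¹*u⁻¹*v⁻¹ + x*y ^ 2*q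 ^ 2*b ^ 2*t*A*B⁻¹*C*D⁻¹*u⁻¹*v⁻¹ - x ^ 2*x⁻¹*q*b ^ 2*A*B⁻¹*C*D⁻¹*u⁻¹*v⁻¹ + x ^ 2*x⁻¹*y*q*b ^ 2*t*A*B⁻¹*C*D⁻¹*u⁻¹*v⁻¹ - x ^ 3*y*q ^ 2*b ^ 4*t*A*B⁻¹*C*D⁻¹*u⁻¹*v⁻¹ + x ^ 3*y ^ 2*q ^ 2*b ^ 4*t ^ 2*A*B⁻¹*C*D⁻¹*u⁻¹*v⁻¹ + x ^ 3*y ^ 2*q ^ 3*b ^ 4*t*A*B⁻¹*C*D⁻¹*u⁻¹*v⁻¹ - x ^ 3*y ^ 3*q ^ 3*b ^ 4*t ^ 2*A*B⁻¹*C*D⁻¹*u⁻¹*v⁻¹) * h3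
      + (- x⁻¹*q⁻¹*t*A*B⁻¹*C*D⁻¹*v*v⁻¹ + x⁻¹*y⁻¹*q⁻¹*A*B⁻¹*C*D⁻¹*v*v⁻¹ - x*q*b ^ 2*A*B⁻¹*C*D⁻¹*v*v⁻¹ + x*y*q*b ^ 2*t*A*B⁻¹*C*D⁻¹*v*v⁻¹) * h4
      + (- x⁻¹*q⁻¹*t*A*B⁻¹*C*D⁻¹ + x⁻¹*y⁻¹*q⁻¹*A*B⁻¹*C*D⁻¹ - x*q*b ^ 2*A*B⁻¹*C*D⁻¹ + x*y*q*b ^ 2*t*A*B⁻¹*C*D⁻¹) * h5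

set_option maxHeartbeats 1600000 in
lemma step_case (b q t : F) (hq0 : q ≠ 0)
    (hq : ∀ m : ℤ, m ≠ 0 → q ^ m ≠ 1)
    (hat : ∀ m : ℤ, b ^ 2 * t * q ^ m ≠ 1) (m n : ℕ) :
    GS b q t (m + n + 1) m
      = (1 - t) * termS b q t (m + n + 1) m + GS b q t (m + n + 1) (m + 1) := by
  have hrm : (m + n + 1) - m = n + 1 := by omega
  have hrm1 : (m + n + 1) - (m + 1) = n := by omega
  rw [GS, GS, termS, hrm, hrm1]
  rw [zpow_neg, zpow_natCast]
  rw [qPoch_succ_right t q n, qPoch_succ_right q q n]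
  rw [show qPoch (b ^ 2 * q ^ (m + n + 1 + m + 1)) q (n + 1)
        = (1 - b ^ 2 * q ^ (m + n + 1 + m + 1)) *
            qPoch (b ^ 2 * q ^ (m + n + 1 + (m + 1) + 1)) q n by
    rw [qPoch_succ_left, mul_assoc, ← pow_succ,
      show m + n + 1 + m + 1 + 1 = m + n + 1 + (m + 1) + 1 from by omega]]
  rw [show qPoch (b ^ 2 * q ^ (m + n + 1 + m) * t) q (n + 1)
        = (1 - b ^ 2 * q ^ (m + n + 1 + m) * t) *
            qPoch (b ^ 2 * q ^ (m + n + 1 + (m + 1)) * t) q n by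
    rw [qPoch_succ_left,
      show b ^ 2 * q ^ (m + n + 1 + m) * t * q = b ^ 2 * q ^ (m + n + 1 + m + 1) * t from by
        rw [pow_succ]; ring,
      show m + n + 1 + m + 1 = m + n + 1 + (m + 1) from by omega]]
  -- nonzero denominators
  have hB : qPoch q q n ≠ 0 := qPoch_q_ne q hq0 hq n
  have hD : qPoch (b ^ 2 * q ^ (m + n + 1 + (m + 1)) * t) q n ≠ 0 :=
    qPoch_bt_ne b q t hq0 hat _ n
  have hq1 : 1 - q * q ^ n ≠ 0 := by
    have := one_sub_q_ne q hq (n + 1) (by omega)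
    rwa [pow_succ, mul_comm (q ^ n) q] at this
  have hbt1 : 1 - b ^ 2 * q ^ (m + n + 1 + m) * t ≠ 0 := one_sub_bt_ne b q t hat _
  have hxm : (q : F) ^ m ≠ 0 := pow_ne_zero _ hq0
  have hxn : (q : F) ^ n ≠ 0 := pow_ne_zero _ hq0
  -- rewrite all powers in terms of q^m, q^n, q
  have p2m : (q : F) ^ (2 * m) = (q ^ m) ^ 2 := by rw [← pow_mul, mul_comm]
  have prm1 : (q : F) ^ (m + n + 1 + m + 1) = (q ^ m) ^ 2 * q ^ n * q ^ 2 := by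
    rw [show m + n + 1 + m + 1 = m + m + n + 2 from by omega, pow_add, pow_add, pow_add]; ring
  have prm1' : (q : F) ^ (m + n + 1 + (m + 1)) = (q ^ m) ^ 2 * q ^ n * q ^ 2 := by
    rw [show m + n + 1 + (m + 1) = m + n + 1 + m + 1 from by omega, prm1]
  have prm2 : (q : F) ^ (m + n + 1 + (m + 1) + 1) = (q ^ m) ^ 2 * q ^ n * q ^ 3 := by
    rw [pow_succ, prm1']; ring
  have prm : (q : F) ^ (m + n + 1 + m) = (q ^ m) ^ 2 * q ^ n * q := by
    rw [show m + n + 1 + m = m + m + n + 1 from by omega, pow_add, pow_add, pow_add]; ring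
  have pr : (q : F) ^ (m + n + 1) = q ^ m * q ^ n * q := by
    rw [pow_add, pow_add]; ring
  have pm1 : (q : F) ^ (m + 1) = q ^ m * q := pow_succ q m
  rw [prm1, prm1', prm2, prm, p2m, pr, pm1]
  generalize qPoch t q n = A
  generalize qPoch (b ^ 2 * ((q ^ m) ^ 2 * q ^ n * q ^ 3)) q n = C
  have hD2 : qPoch (b ^ 2 * ((q ^ m) ^ 2 * q ^ n * q ^ 2) * t) q n ≠ 0 := by
    rw [← prm1']; exact hD
  have hbt2 : 1 - b ^ 2 * ((q ^ m) ^ 2 * q ^ n * q) * t ≠ 0 := by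
    rw [← prm]; exact hbt1
  generalize qPoch q q n = B at hB ⊢
  generalize qPoch (b ^ 2 * ((q ^ m) ^ 2 * q ^ n * q ^ 2) * t) q n = D at hD2 ⊢
  generalize hgx : (q : F) ^ m = x at *
  generalize hgy : (q : F) ^ n = y at *
  exact step_aux x y q b t A B C D hxm hxn hq0 hB hD2 hq1 hbt2

/-- Telescoping: the partial sums have the stated closed form. -/
lemma key (b q t : F) (hq0 : q ≠ 0)
    (hq : ∀ m : ℤ, m ≠ 0 → q ^ m ≠ 1)
    (hat : ∀ m : ℤ, b ^ 2 * t * q ^ m ≠ 1) :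
    ∀ n m : ℕ, (1 - t) * ∑ k ∈ Finset.Icc m (m + n), termS b q t (m + n) k
      = GS b q t (m + n) m := by
  intro n
  induction n with
  | zero =>
    intro m
    simp only [Nat.add_zero, Finset.Icc_self, Finset.sum_singleton]
    exact base_case b q t hq0 m
  | succ n ih =>
    intro m
    have hle : m ≤ m + (n + 1) := by omega
    rw [Finset.Icc_eq_cons_Ioc hle, Finset.sum_cons, ← Finset.Icc_add_one_left_eq_Ioc]
    rw [mul_add]
    have h2 := ih (m + 1)
    rw [show m + 1 + n = m + (n + 1) by omega] at h2
    rw [h2, show m + (n + 1) = m + n + 1 by omega]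
    exact (step_case b q t hq0 hq hat m n).symm

end Aux

/-- The key single-variable summation in the proof of Theorem 3 (with `b = a^{1/2}`,
so `a = b²`):
`(1-t)(a^{-1/2}/t) ∑_{k=1}^r q^{-k}(1-aq^{2k}) ((t;q)_{r-k}/(q;q)_{r-k})
   ((aq^{r+k+1};q)_{r-k}/(aq^{r+k}t;q)_{r-k})
 = ((t;q)_r/(q;q)_r) ((aq^{r+1};q)_r/(aq^r t;q)_r)
   (a^{1/2}q^r + a^{-1/2}q^{-r}/t - a^{1/2} - a^{-1/2}/t)`. -/
theorem stmt16 {F : Type*} [Field F] (b q t : F) (r : ℕ)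
    (hq0 : q ≠ 0) (ht0 : t ≠ 0) (hb0 : b ≠ 0)
    (hq : ∀ m : ℤ, m ≠ 0 → q ^ m ≠ 1)
    (hat : ∀ m : ℤ, b ^ 2 * t * q ^ m ≠ 1) :
    (1 - t) * (b⁻¹ / t) *
      ∑ k ∈ Finset.Icc 1 r,
        q ^ (-(k : ℤ)) * (1 - b ^ 2 * q ^ (2 * k)) *
          (qPoch t q (r - k) / qPoch q q (r - k)) *
          (qPoch (b ^ 2 * q ^ (r + k + 1)) q (r - k) /
            qPoch (b ^ 2 * q ^ (r + k) * t) q (r - k))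
    = (qPoch t q r / qPoch q q r) *
        (qPoch (b ^ 2 * q ^ (r + 1)) q r / qPoch (b ^ 2 * q ^ r * t) q r) *
        (b * q ^ r + b⁻¹ * q ^ (-(r : ℤ)) / t - b - b⁻¹ / t) := by
  rcases Nat.eq_zero_or_pos r with hr | hr
  · subst hr
    simp [qPoch_zero]
  · obtain ⟨s, rfl⟩ : ∃ s, r = s + 1 := ⟨r - 1, by omega⟩
    have hsum : (1 - t) * ∑ k ∈ Finset.Icc 1 (s + 1), termS b q t (s + 1) k
        = GS b q t (s + 1) 1 := by
      have h := key b q t hq0 hq hat s 1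
      rwa [show 1 + s = s + 1 by omega] at h
    have heq : ∑ k ∈ Finset.Icc 1 (s + 1),
        q ^ (-(k : ℤ)) * (1 - b ^ 2 * q ^ (2 * k)) *
          (qPoch t q (s + 1 - k) / qPoch q q (s + 1 - k)) *
          (qPoch (b ^ 2 * q ^ (s + 1 + k + 1)) q (s + 1 - k) /
            qPoch (b ^ 2 * q ^ (s + 1 + k) * t) q (s + 1 - k))
        = ∑ k ∈ Finset.Icc 1 (s + 1), termS b q t (s + 1) k := rfl
    rw [heq, mul_comm (1 - t) (b⁻¹ / t), mul_assoc, hsum]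
    rw [GS, show s + 1 - 1 = s from by omega]
    rw [zpow_neg, zpow_natCast]
    rw [show qPoch t q (s + 1) = qPoch t q s * (1 - t * q ^ s) from qPoch_succ_right t q s,
      show qPoch q q (s + 1) = qPoch q q s * (1 - q * q ^ s) from qPoch_succ_right q q s]
    rw [show qPoch (b ^ 2 * q ^ (s + 1 + 1)) q (s + 1)
        = (1 - b ^ 2 * q ^ (s + 1 + 1)) * qPoch (b ^ 2 * q ^ (s + 1 + 1 + 1)) q s by
      rw [qPoch_succ_left, mul_assoc, ← pow_succ]]
    rw [show qPoch (b ^ 2 * q ^ (s + 1) * t) q (s + 1)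
        = (1 - b ^ 2 * q ^ (s + 1) * t) * qPoch (b ^ 2 * q ^ (s + 1 + 1) * t) q s by
      rw [qPoch_succ_left,
        show b ^ 2 * q ^ (s + 1) * t * q = b ^ 2 * q ^ (s + 1 + 1) * t from by
          rw [pow_succ]; ring]]
    have hB : qPoch q q s ≠ 0 := qPoch_q_ne q hq0 hq s
    have hD : qPoch (b ^ 2 * q ^ (s + 1 + 1) * t) q s ≠ 0 := qPoch_bt_ne b q t hq0 hat _ s
    have hq1 : 1 - q * q ^ s ≠ 0 := by
      have h := one_sub_q_ne q hq (s + 1) (by omega)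
      rwa [pow_succ, mul_comm (q ^ s) q] at h
    have hbt1 : 1 - b ^ 2 * q ^ (s + 1) * t ≠ 0 := one_sub_bt_ne b q t hat _
    have hxs : (q : F) ^ s ≠ 0 := pow_ne_zero _ hq0
    have p1 : (q : F) ^ (s + 1) = q ^ s * q := pow_succ q s
    have p2 : (q : F) ^ (s + 1 + 1) = q ^ s * q ^ 2 := by rw [pow_succ, p1]; ring
    have p3 : (q : F) ^ (s + 1 + 1 + 1) = q ^ s * q ^ 3 := by rw [pow_succ, p2]; ring
    rw [p1, p2, p3]
    generalize qPoch t q s = A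
    generalize qPoch (b ^ 2 * (q ^ s * q ^ 3)) q s = C
    generalize qPoch q q s = B at hB ⊢
    generalize qPoch (b ^ 2 * (q ^ s * q ^ 2) * t) q s = D at hD ⊢
    generalize hgx : (q : F) ^ s = x at *
    have hbt1' : 1 - b ^ 2 * (x * q) * t ≠ 0 := by
      have h := hbt1; rwa [p1] at h
    set u : F := 1 - q * x with hu
    set v : F := 1 - b ^ 2 * (x * q) * t with hv
    clear_value u v
    have h1 : x * x⁻¹ = 1 := mul_inv_cancel₀ hxs
    have h2 : q * q⁻¹ = 1 := mul_inv_cancel₀ hq0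
    have h3 : b * b⁻¹ = 1 := mul_inv_cancel₀ hb0
    have h4 : t * t⁻¹ = 1 := mul_inv_cancel₀ ht0
    have h5 : u * u⁻¹ = 1 := mul_inv_cancel₀ hq1
    have h6 : v * v⁻¹ = 1 := mul_inv_cancel₀ hbt1'
    linear_combination (q⁻¹*b⁻¹*t*t⁻¹*A*B⁻¹*C*D⁻¹*u⁻¹*v⁻¹ - q*q⁻¹*b⁻¹*t⁻¹*A*B⁻¹*C*D⁻¹*u⁻¹*v⁻¹ - q*q⁻¹*b ^ 2*b⁻¹*t*t⁻¹*A*B⁻¹*C*D⁻¹*v⁻¹ + q ^ 2*q⁻¹*b ^ 2*b⁻¹*t⁻¹*A*B⁻¹*C*D⁻¹*u⁻¹*v⁻¹ - x*q ^ 2*q⁻¹*b ^ 2*b⁻¹*t*t⁻¹*A*B⁻¹*C*D⁻¹*u⁻¹*v⁻¹) * h1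
          + (- b⁻¹*t⁻¹*A*B⁻¹*C*D⁻¹*u⁻¹*v⁻¹ - b ^ 2*b⁻¹*t*t⁻¹*A*B⁻¹*C*D⁻¹*v⁻¹ - q*b ^ 2*b⁻¹*t⁻¹*A*B⁻¹*C*D⁻¹ + q*b ^ 2*b⁻¹*t⁻¹*A*B⁻¹*C*D⁻¹*u⁻¹*v⁻¹ + x⁻¹*q⁻¹*b⁻¹*t⁻¹*A*B⁻¹*C*D⁻¹ + x*b⁻¹*A*B⁻¹*C*D⁻¹*u⁻¹*v⁻¹ + x*b ^ 2*b⁻¹*t*A*B⁻¹*C*D⁻¹*v⁻¹ + x*q*b ^ 2*b⁻¹*t*t⁻¹*A*B⁻¹*C*D⁻¹ - x*q*b ^ 2*b⁻¹*t*t⁻¹*A*B⁻¹*C*D⁻¹*u⁻¹*v⁻¹) * h2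
          + (- b*t*t⁻¹*A*B⁻¹*C*D⁻¹*v⁻¹ - q*b*t⁻¹*A*B⁻¹*C*D⁻¹ + q*b*t⁻¹*A*B⁻¹*C*D⁻¹*u⁻¹*v⁻¹ + x*b*t*A*B⁻¹*C*D⁻¹*v⁻¹ + x*q*b*t*t⁻¹*A*B⁻¹*C*D⁻¹ - x*q*b*t*t⁻¹*A*B⁻¹*C*D⁻¹*u⁻¹*v⁻¹ - x*q ^ 2*b*t⁻¹*A*B⁻¹*C*D⁻¹*u⁻¹*v⁻¹ + x ^ 2*q ^ 2*b*t*t⁻¹*A*B⁻¹*C*D⁻¹*u⁻¹*v⁻¹) * h3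
          + (- b*A*B⁻¹*C*D⁻¹*v⁻¹ - q⁻¹*b⁻¹*A*B⁻¹*C*D⁻¹ + q⁻¹*b⁻¹*A*B⁻¹*C*D⁻¹*u⁻¹*v⁻¹ - x*b⁻¹*A*B⁻¹*C*D⁻¹*u⁻¹*v⁻¹ + x*q*b*A*B⁻¹*C*D⁻¹ - x*q*b*A*B⁻¹*C*D⁻¹*u⁻¹*v⁻¹ + x*q ^ 2*b ^ 3*A*B⁻¹*C*D⁻¹*v⁻¹ + x ^ 2*q ^ 2*b*A*B⁻¹*C*D⁻¹*u⁻¹*v⁻¹) * h4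
          + (b*A*B⁻¹*C*D⁻¹*v⁻¹ + q⁻¹*b⁻¹*A*B⁻¹*C*D⁻¹*v⁻¹ + q*b*t⁻¹*A*B⁻¹*C*D⁻¹*v⁻¹ - x⁻¹*q⁻¹*b⁻¹*t⁻¹*A*B⁻¹*C*D⁻¹*v⁻¹ - x*b*t*A*B⁻¹*C*D⁻¹*v⁻¹ - x*q*b*A*B⁻¹*C*D⁻¹*v⁻¹ - x*q ^ 2*b ^ 3*A*B⁻¹*C*D⁻¹*v⁻¹ + x ^ 2*q ^ 2*b ^ 3*t*A*B⁻¹*C*D⁻¹*v⁻¹) * h5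
          + (q⁻¹*b⁻¹*A*B⁻¹*C*D⁻¹ + q*b*t⁻¹*A*B⁻¹*C*D⁻¹ - x⁻¹*q⁻¹*b⁻¹*t⁻¹*A*B⁻¹*C*D⁻¹ - x*q*b*A*B⁻¹*C*D⁻¹) * h6
          + (- b*A*B⁻¹*C*D⁻¹*u⁻¹*v⁻¹ - q⁻¹*b⁻¹*A*B⁻¹*C*D⁻¹*u⁻¹*v⁻¹ - q*b*t⁻¹*A*B⁻¹*C*D⁻¹*u⁻¹*v⁻¹ + x⁻¹*q⁻¹*b⁻¹*t⁻¹*A*B⁻¹*C*D⁻¹*u⁻¹*v⁻¹ + x*b*t*A*B⁻¹*C*D⁻¹*u⁻¹*v⁻¹ + x*q*b*A*B⁻¹*C*D⁻¹*u⁻¹*v⁻¹ + x*q ^ 2*b ^ 3*A*B⁻¹*C*D⁻¹*u⁻¹*v⁻¹ - x ^ 2*q ^ 2*b ^ 3*t*A*B⁻¹*C*D⁻¹*u⁻¹*v⁻¹) * hu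
          + (- q⁻¹*b⁻¹*A*B⁻¹*C*D⁻¹*v⁻¹ - q*b*t⁻¹*A*B⁻¹*C*D⁻¹*v⁻¹ + x⁻¹*q⁻¹*b⁻¹*t⁻¹*A*B⁻¹*C*D⁻¹*v⁻¹ + x*q*b*A*B⁻¹*C*D⁻¹*v⁻¹) * hv
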